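/- For all real numbers a₁₂, a₁₃, a₂₃, b₁₂, b₁₃, the bracket of 𝔤ᴸ(a₁₂,a₁₃,a₂₃,b₁₂,b₁₃) satisfies the Jacobi identity, so 𝔤ᴸ(a₁₂,a₁₃,a₂₃,b₁₂,b₁₃) is a real Lie algebra, and it is unimodular: tr(ad(x)) = 0 for every x. -/
import Mathlib


/-!
STATEMENT 16: the bracket of 𝔤ᴸ(a₁₂,a₁₃,a₂₃,b₁₂,b₁₃) satisfies the Jacobi identity and
is unimodular.
-/

/-- The skew-symmetric bilinear bracket on `ℝ³` determined by
`[e₁,e₂] = −a₁₂e₁ − b₁₂e₂ − (a₂₃−b₁₃)e₃`, `[e₁,e₃] = −a₁₃e₁ − b₁₃e₂ + b₁₂e₃`,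
`[e₂,e₃] = −a₂₃e₁ + a₁₃e₂ − a₁₂e₃`. -/
def harmBracketL (a₁₂ a₁₃ a₂₃ b₁₂ b₁₃ : ℝ) (u v : Fin 3 → ℝ) : Fin 3 → ℝ :=
  (u 0 * v 1 - u 1 * v 0) • ![-a₁₂, -b₁₂, -(a₂₃ - b₁₃)] +
    (u 0 * v 2 - u 2 * v 0) • ![-a₁₃, -b₁₃, b₁₂] +
    (u 1 * v 2 - u 2 * v 1) • ![-a₂₃, a₁₃, -a₁₂]

/-- The matrix (in the standard basis) of the adjoint map `ad(x) = [x,·]`. -/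
def adMatrixL (a₁₂ a₁₃ a₂₃ b₁₂ b₁₃ : ℝ) (x : Fin 3 → ℝ) : Matrix (Fin 3) (Fin 3) ℝ :=
  Matrix.of fun m j => harmBracketL a₁₂ a₁₃ a₂₃ b₁₂ b₁₃ x (Pi.single j 1) m

/-- For all real `a₁₂, a₁₃, a₂₃, b₁₂, b₁₃`, the bracket of
`𝔤ᴸ(a₁₂,a₁₃,a₂₃,b₁₂,b₁₃)` satisfies the Jacobi identity (so it is a real Lie algebra) and
the Lie algebra is unimodular: `tr(ad(x)) = 0` for every `x`. -/
theorem harmBracketL_jacobi_unimodular (a₁₂ a₁₃ a₂₃ b₁₂ b₁₃ : ℝ) :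
    (∀ x y z : Fin 3 → ℝ,
        harmBracketL a₁₂ a₁₃ a₂₃ b₁₂ b₁₃ x (harmBracketL a₁₂ a₁₃ a₂₃ b₁₂ b₁₃ y z) +
            harmBracketL a₁₂ a₁₃ a₂₃ b₁₂ b₁₃ y (harmBracketL a₁₂ a₁₃ a₂₃ b₁₂ b₁₃ z x) +
            harmBracketL a₁₂ a₁₃ a₂₃ b₁₂ b₁₃ z (harmBracketL a₁₂ a₁₃ a₂₃ b₁₂ b₁₃ x y) = 0) ∧
      ∀ x : Fin 3 → ℝ, (adMatrixL a₁₂ a₁₃ a₂₃ b₁₂ b₁₃ x).trace = 0 := by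
  constructor
  · intro x y z
    funext i
    fin_cases i <;>
      simp only [harmBracketL, Pi.add_apply, Pi.smul_apply, Matrix.cons_val_zero,
        Matrix.cons_val_one, Matrix.head_cons, Matrix.cons_val_two, Matrix.tail_cons,
        Pi.zero_apply, smul_eq_mul] <;> ring
  · intro x
    simp only [Matrix.trace, Matrix.diag, adMatrixL, Matrix.of_apply, harmBracketL,
      Fin.sum_univ_three, Pi.add_apply, Pi.smul_apply, Matrix.cons_val_zero,
      Matrix.cons_val_one, Matrix.head_cons, Matrix.cons_val_two, Matrix.tail_cons,
      Pi.single_apply, smul_eq_mul]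
    norm_num [Fin.ext_iff]
    ring
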